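/- Row (cell) update monotonicity: let C_X' : X → X* be any clustering function such that for every x ∈ X, D(p(·|x) ‖ p̂(·|C_X' x)) ≤ D(p(·|x) ‖ p̂(·|C_X x)), where p̂ is computed from the current pair (C_X, C_W); in particular this holds for the pointwise update C_X'(x) = argmin_{x* ∈ X*} D(p(·|x) ‖ p̂(·|x*)). Then the objective does not increase: ℓ_A(C_X', C_W) ≤ ℓ_A(C_X, C_W). -/

import Mathlib

open scoped BigOperators

noncomputable section

/-- Kullback–Leibler divergence `D(g‖h)` between nonnegative functions on a finite type,
`D(g‖h) = ∑_{t : g t > 0} g t * log (g t / h t)`, with the convention `D(g‖h) = ⊤`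
whenever `g t > 0 = h t` for some `t`. -/
def KLdiv {T : Type*} [Fintype T] (g h : T → ℝ) : EReal :=
  if ∃ t, 0 < g t ∧ h t = 0 then ⊤
  else ((∑ t ∈ Finset.univ.filter (fun t => 0 < g t),
      g t * Real.log (g t / h t) : ℝ) : EReal)

/-- Row marginal `p₁(x) = ∑_w p(x,w)`. -/
def marg₁ {A B : Type*} [Fintype B] (p : A × B → ℝ) (x : A) : ℝ := ∑ w, p (x, w)

/-- Column marginal `p₂(w) = ∑_x p(x,w)`. -/
def marg₂ {A B : Type*} [Fintype A] (p : A × B → ℝ) (w : B) : ℝ := ∑ x, p (x, w)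

/-- Co-clustered distribution `p*(x*,w*) = ∑_{x : C_X x = x*} ∑_{w : C_W w = w*} p(x,w)`. -/
def coclust {A B As Bs : Type*} [Fintype A] [Fintype B] [DecidableEq As] [DecidableEq Bs]
    (p : A × B → ℝ) (CX : A → As) (CW : B → Bs) : As × Bs → ℝ :=
  fun c => ∑ x ∈ Finset.univ.filter (fun x => CX x = c.1),
             ∑ w ∈ Finset.univ.filter (fun w => CW w = c.2), p (x, w)

/-- Approximating distribution
`p̂(x,w) = p*(C_X x, C_W w) · p₁(x) · p₂(w) / (p₁*(C_X x) · p₂*(C_W w))`. -/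
def approx {A B As Bs : Type*} [Fintype A] [Fintype B] [Fintype As] [Fintype Bs]
    [DecidableEq As] [DecidableEq Bs]
    (p : A × B → ℝ) (CX : A → As) (CW : B → Bs) : A × B → ℝ :=
  fun c =>
    coclust p CX CW (CX c.1, CW c.2) * marg₁ p c.1 * marg₂ p c.2 /
      (marg₁ (coclust p CX CW) (CX c.1) * marg₂ (coclust p CX CW) (CW c.2))

/-- Conditional distribution `p(w|x) = p(x,w)/p₁(x)` on `B`. -/
def condRow {A B : Type*} [Fintype B] (p : A × B → ℝ) (x : A) : B → ℝ :=
  fun w => p (x, w) / marg₁ p x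

/-- Conditional distribution `p(x|w) = p(x,w)/p₂(w)` on `A`. -/
def condCol {A B : Type*} [Fintype A] (p : A × B → ℝ) (w : B) : A → ℝ :=
  fun x => p (x, w) / marg₂ p w

/-- Conditional approximating distribution
`p̂(w|x*) = p*(x*, C_W w) · p₂(w) / (p₁*(x*) · p₂*(C_W w))` on `B`. -/
def approxCondRow {A B As Bs : Type*} [Fintype A] [Fintype B] [Fintype As] [Fintype Bs]
    [DecidableEq As] [DecidableEq Bs]
    (p : A × B → ℝ) (CX : A → As) (CW : B → Bs) (xs : As) : B → ℝ :=
  fun w =>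
    coclust p CX CW (xs, CW w) * marg₂ p w /
      (marg₁ (coclust p CX CW) xs * marg₂ (coclust p CX CW) (CW w))

/-- Conditional approximating distribution
`p̂(x|w*) = p*(C_X x, w*) · p₁(x) / (p₂*(w*) · p₁*(C_X x))` on `A`. -/
def approxCondCol {A B As Bs : Type*} [Fintype A] [Fintype B] [Fintype As] [Fintype Bs]
    [DecidableEq As] [DecidableEq Bs]
    (p : A × B → ℝ) (CX : A → As) (CW : B → Bs) (ws : Bs) : A → ℝ :=
  fun x =>
    coclust p CX CW (CX x, ws) * marg₁ p x /
      (marg₂ (coclust p CX CW) ws * marg₁ (coclust p CX CW) (CX x))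

/-- Mutual information `I(p) = ∑_{x,w} p(x,w) · log (p(x,w)/(p₁(x)·p₂(w)))`
(summing over all pairs; used for the strictly positive original distribution). -/
def mutualInfoFull {A B : Type*} [Fintype A] [Fintype B] (p : A × B → ℝ) : ℝ :=
  ∑ x, ∑ w, p (x, w) * Real.log (p (x, w) / (marg₁ p x * marg₂ p w))

/-- Mutual information `I(p*) = ∑_{(x*,w*) : p*(x*,w*) > 0} p*(x*,w*) ·
log (p*(x*,w*)/(p₁*(x*)·p₂*(w*)))` (summing only over positive entries). -/
def mutualInfoPos {A B : Type*} [Fintype A] [Fintype B] (p : A × B → ℝ) : ℝ :=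
  ∑ c ∈ Finset.univ.filter (fun c : A × B => 0 < p c),
    p c * Real.log (p c / (marg₁ p c.1 * marg₂ p c.2))

/-- The co-clustering objective `ℓ_A(C_X, C_W) = I(p) − I(p*)`. -/
def lossA {A B As Bs : Type*} [Fintype A] [Fintype B] [Fintype As] [Fintype Bs]
    [DecidableEq As] [DecidableEq Bs]
    (p : A × B → ℝ) (CX : A → As) (CW : B → Bs) : ℝ :=
  mutualInfoFull p - mutualInfoPos (coclust p CX CW)

/-- The elastic coupled co-clustering objective
`ℓ_T(C_Y, C_Z) = I(q) − I(q*) + α·D(q₁*‖π) + β·D(q₂*‖ρ)`. -/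
def lossT {A B As Bs : Type*} [Fintype A] [Fintype B] [Fintype As] [Fintype Bs]
    [DecidableEq As] [DecidableEq Bs]
    (q : A × B → ℝ) (CY : A → As) (CZ : B → Bs) (π : As → ℝ) (ρ : Bs → ℝ)
    (α β : ℝ) : EReal :=
  ((mutualInfoFull q - mutualInfoPos (coclust q CY CZ) : ℝ) : EReal)
    + (α : EReal) * KLdiv (marg₁ (coclust q CY CZ)) π
    + (β : EReal) * KLdiv (marg₂ (coclust q CY CZ)) ρ

end

/-!
Write `ℓ_A(C_X, C_W) = ∑ₓ p(x) D(p(·|x) ‖ p̂(·|C_X x))`. Reassigning the rows by `C_X'` while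
keeping `p̂` fixed does not increase this sum, by hypothesis. Recomputing `p̂` from `(C_X', C_W)`
does not increase it either: `p̂(w|x*) = p*(C_W w|x*) · p(w) / p₂*(C_W w)`, the column factor does
not depend on the row clustering, and for the cluster conditionals `p*(·|x*)` Gibbs' inequality
(`log t ≤ t - 1`) shows that the recomputed ones fit best.
-/

open Finset Real

section KullbackLeibler

variable {T : Type*} [Fintype T] {g h : T → ℝ}

lemma KLdiv_eq_sum (hg : ∀ t, 0 < g t) (hh : ∀ t, h t ≠ 0) :
    KLdiv g h = ((∑ t, g t * log (g t / h t) : ℝ) : EReal) := by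
  rw [KLdiv, if_neg (fun ⟨t, _, ht⟩ => hh t ht), filter_true_of_mem fun t _ => hg t]

lemma ne_zero_of_KLdiv_ne_top (hg : ∀ t, 0 < g t) (hKL : KLdiv g h ≠ ⊤) (t : T) : h t ≠ 0 :=
  fun ht => hKL (if_pos ⟨t, hg t, ht⟩)

lemma sum_mul_log_nonpos_of_sum_mul_le {a r : T → ℝ} (ha : ∀ t, 0 ≤ a t)
    (hr : ∀ t, 0 < a t → 0 < r t) (hsum : ∑ t, a t * r t ≤ ∑ t, a t) :
    ∑ t, a t * log (r t) ≤ 0 := by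
  have hterm : ∀ t, a t * log (r t) ≤ a t * r t - a t := by
    intro t
    rcases (ha t).eq_or_lt with h0 | hpos
    · simp [← h0]
    · nlinarith [log_le_sub_one_of_pos (hr t hpos)]
  calc ∑ t, a t * log (r t) ≤ ∑ t, (a t * r t - a t) := sum_le_sum fun t _ => hterm t
    _ ≤ 0 := by rw [sum_sub_distrib]; linarith

end KullbackLeibler

section Marginals

variable {A B : Type*} {p : A × B → ℝ}

lemma le_marg₁ [Fintype B] (hp : ∀ c, 0 ≤ p c) (x : A) (w : B) : p (x, w) ≤ marg₁ p x :=
  single_le_sum (fun w _ => hp (x, w)) (mem_univ w)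

lemma le_marg₂ [Fintype A] (hp : ∀ c, 0 ≤ p c) (x : A) (w : B) : p (x, w) ≤ marg₂ p w :=
  single_le_sum (fun x _ => hp (x, w)) (mem_univ x)

lemma condRow_pos [Fintype B] (hp : ∀ c, 0 < p c) (x : A) (w : B) : 0 < condRow p x w :=
  div_pos (hp _) ((hp _).trans_le (le_marg₁ (fun c => (hp c).le) x w))

lemma mutualInfoPos_eq_sum [Fintype A] [Fintype B] (hp : ∀ c, 0 ≤ p c) :
    mutualInfoPos p = ∑ c, p c * log (p c / (marg₁ p c.1 * marg₂ p c.2)) :=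
  sum_filter_of_ne fun c _ hc => (hp c).lt_of_ne' (left_ne_zero_of_mul hc)

lemma sum_mul_marg₁_eq_sum_condRow [Fintype B] (hp : ∀ c, 0 < p c) (x : A) (f : B → ℝ) :
    ∑ w, p (x, w) * f w = marg₁ p x * ∑ w, condRow p x w * f w := by
  rw [mul_sum]
  refine sum_congr rfl fun w _ => ?_
  have hx := (hp (x, w)).trans_le (le_marg₁ (fun c => (hp c).le) x w)
  rw [condRow, ← mul_assoc, mul_div_cancel₀ _ hx.ne']

/-- The mass condition of `sum_mul_log_nonpos_of_sum_mul_le` for the ratio of conditionals. -/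
lemma sum_mul_condRow_div_condRow_le [Fintype A] [Fintype B] {q q' : A × B → ℝ}
    (hq : ∀ c, 0 ≤ q c) (hq' : ∀ c, 0 ≤ q' c) :
    ∑ c, q' c * (condRow q c.1 c.2 / condRow q' c.1 c.2) ≤ ∑ c, q' c := by
  have hterm : ∀ c : A × B,
      q' c * (condRow q c.1 c.2 / condRow q' c.1 c.2) ≤ condRow q c.1 c.2 * marg₁ q' c.1 := by
    intro c
    have hcond : 0 ≤ condRow q c.1 c.2 := div_nonneg (hq c) (sum_nonneg fun _ _ => hq _)
    have hm' : 0 ≤ marg₁ q' c.1 := sum_nonneg fun _ _ => hq' _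
    rcases (hq' c).eq_or_lt with h0 | hpos
    · simpa [← h0] using mul_nonneg hcond hm'
    · have hm'pos : 0 < marg₁ q' c.1 := hpos.trans_le (le_marg₁ hq' c.1 c.2)
      refine le_of_eq ?_
      simp only [condRow]
      field_simp
  calc ∑ c, q' c * (condRow q c.1 c.2 / condRow q' c.1 c.2)
      ≤ ∑ c : A × B, condRow q c.1 c.2 * marg₁ q' c.1 := sum_le_sum fun c _ => hterm c
    _ = ∑ a, marg₁ q a / marg₁ q a * marg₁ q' a := by
      rw [Fintype.sum_prod_type]
      simp only [condRow, ← sum_mul, ← sum_div]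
      rfl
    _ ≤ ∑ a, marg₁ q' a :=
      sum_le_sum fun a _ => mul_le_of_le_one_left (sum_nonneg fun _ _ => hq' _) (div_self_le_one _)
    _ = ∑ c, q' c := (Fintype.sum_prod_type q').symm

end Marginals

section CoClustering

variable {X W Xs Ws : Type*} [Fintype X] [Fintype W] [DecidableEq Xs] [DecidableEq Ws]
  {p : X × W → ℝ}

lemma coclust_nonneg (hp : ∀ c, 0 ≤ p c) (C : X → Xs) (CW : W → Ws) (cs : Xs × Ws) :
    0 ≤ coclust p C CW cs :=
  sum_nonneg fun _ _ => sum_nonneg fun _ _ => hp _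

lemma le_coclust (hp : ∀ c, 0 ≤ p c) (C : X → Xs) (CW : W → Ws) (x : X) (w : W) :
    p (x, w) ≤ coclust p C CW (C x, CW w) :=
  (single_le_sum (fun w _ => hp (x, w)) (by simp : w ∈ univ.filter (CW · = CW w))).trans
    (single_le_sum (f := fun x => ∑ w ∈ univ.filter (CW · = CW w), p (x, w))
      (fun _ _ => sum_nonneg fun _ _ => hp _) (by simp : x ∈ univ.filter (C · = C x)))

lemma coclust_eq_sum_filter (p : X × W → ℝ) (C : X → Xs) (CW : W → Ws) (cs : Xs × Ws) :
    coclust p C CW cs = ∑ c ∈ univ.filter (fun c : X × W => (C c.1, CW c.2) = cs), p c := by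
  rw [coclust, ← sum_product']
  refine sum_congr ?_ fun _ _ => rfl
  ext c
  simp [Prod.ext_iff]

variable [Fintype Xs]

lemma marg₂_coclust (p : X × W → ℝ) (C : X → Xs) (CW : W → Ws) (ws : Ws) :
    marg₂ (coclust p C CW) ws = ∑ x, ∑ w ∈ univ.filter (CW · = ws), p (x, w) := by
  unfold marg₂ coclust
  exact sum_fiberwise univ C (fun x => ∑ w ∈ univ.filter (CW · = ws), p (x, w))

lemma marg₂_le_marg₂_coclust (hp : ∀ c, 0 ≤ p c) (C : X → Xs) (CW : W → Ws) (w : W) :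
    marg₂ p w ≤ marg₂ (coclust p C CW) (CW w) := by
  rw [marg₂_coclust]
  exact sum_le_sum fun x _ =>
    single_le_sum (fun w _ => hp (x, w)) (by simp : w ∈ univ.filter (CW · = CW w))

variable [Fintype Ws]

lemma sum_coclust_mul (p : X × W → ℝ) (C : X → Xs) (CW : W → Ws) (f : Xs × Ws → ℝ) :
    ∑ cs, coclust p C CW cs * f cs = ∑ c : X × W, p c * f (C c.1, CW c.2) := by
  rw [← sum_fiberwise univ (fun c : X × W => (C c.1, CW c.2))]
  refine sum_congr rfl fun cs _ => ?_
  rw [coclust_eq_sum_filter, sum_mul]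
  exact sum_congr rfl fun c hc => by rw [(mem_filter.mp hc).2]

lemma approxCondRow_eq (p : X × W → ℝ) (C : X → Xs) (CW : W → Ws) (xs : Xs) (w : W) :
    approxCondRow p C CW xs w
      = condRow (coclust p C CW) xs (CW w) * (marg₂ p w / marg₂ (coclust p C CW) (CW w)) :=
  mul_div_mul_comm _ _ _ _

lemma approxCondRow_pos (hp : ∀ c, 0 < p c) (C : X → Xs) (CW : W → Ws) (x : X) (w : W) :
    0 < approxCondRow p C CW (C x) w := by
  have hp' : ∀ c, 0 ≤ p c := fun c => (hp c).le
  have hq := (hp (x, w)).trans_le (le_coclust hp' C CW x w)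
  have hp₂ := (hp (x, w)).trans_le (le_marg₂ hp' x w)
  rw [approxCondRow_eq]
  exact mul_pos (div_pos hq (hq.trans_le (le_marg₁ (coclust_nonneg hp' C CW) _ _)))
    (div_pos hp₂ (hp₂.trans_le (marg₂_le_marg₂_coclust hp' C CW w)))

lemma approxCondRow_nonneg (hp : ∀ c, 0 ≤ p c) (C : X → Xs) (CW : W → Ws) (xs : Xs) (w : W) :
    0 ≤ approxCondRow p C CW xs w := by
  have hq := coclust_nonneg hp C CW
  exact div_nonneg (mul_nonneg (hq _) (sum_nonneg fun _ _ => hp _))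
    (mul_nonneg (sum_nonneg fun _ _ => hq _) (sum_nonneg fun _ _ => hq _))

/-- The column factor `p(w) / p₂*(C_W w)` of `p̂(w|x*)` does not depend on the row clustering. -/
lemma approxCondRow_div_approxCondRow (hp : ∀ c, 0 ≤ p c) (C C' : X → Xs) (CW : W → Ws)
    (xs : Xs) {w : W} (hw : 0 < marg₂ p w) :
    approxCondRow p C CW xs w / approxCondRow p C' CW xs w
      = condRow (coclust p C CW) xs (CW w) / condRow (coclust p C' CW) xs (CW w) := by
  have hq₂ := hw.trans_le (marg₂_le_marg₂_coclust hp C CW w)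
  rw [approxCondRow_eq, approxCondRow_eq, marg₂_coclust, marg₂_coclust p C',
    ← marg₂_coclust p C, mul_div_mul_right _ _ (div_pos hw hq₂).ne']

end CoClustering

section RowLoss

variable {X W Xs Ws : Type*} [Fintype X] [Fintype W] [Fintype Xs] [Fintype Ws]
  [DecidableEq Xs] [DecidableEq Ws] {p : X × W → ℝ}

/-- `∑ₓ p(x) D(p(·|x) ‖ p̂(·|D x))`, where `p̂` is built from `(C, CW)` and rows are
assigned to row clusters by `D`. -/
noncomputable def rowLoss (p : X × W → ℝ) (C : X → Xs) (CW : W → Ws) (D : X → Xs) : ℝ :=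
  ∑ x, ∑ w, p (x, w) * log (condRow p x w / approxCondRow p C CW (D x) w)

lemma lossA_eq_rowLoss (hp : ∀ c, 0 < p c) (C : X → Xs) (CW : W → Ws) :
    lossA p C CW = rowLoss p C CW C := by
  have hp' : ∀ c, 0 ≤ p c := fun c => (hp c).le
  have hterm : ∀ x w, log (condRow p x w / approxCondRow p C CW (C x) w)
      = log (p (x, w) / (marg₁ p x * marg₂ p w))
        - log (coclust p C CW (C x, CW w)
          / (marg₁ (coclust p C CW) (C x) * marg₂ (coclust p C CW) (CW w))) := by
    intro x w
    have hpxw := hp (x, w)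
    have hq := hpxw.trans_le (le_coclust hp' C CW x w)
    have hp₁ := hpxw.trans_le (le_marg₁ hp' x w)
    have hp₂ := hpxw.trans_le (le_marg₂ hp' x w)
    have hq₁ := hq.trans_le (le_marg₁ (coclust_nonneg hp' C CW) _ _)
    have hq₂ := hp₂.trans_le (marg₂_le_marg₂_coclust hp' C CW w)
    rw [← log_div (by positivity) (by positivity)]
    simp only [condRow, approxCondRow]
    congr 1
    ring
  rw [lossA, mutualInfoFull, mutualInfoPos_eq_sum (coclust_nonneg hp' C CW), sum_coclust_mul,
    Fintype.sum_prod_type, rowLoss, ← sum_sub_distrib]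
  simp only [hterm, mul_sub, sum_sub_distrib]

lemma rowLoss_le_rowLoss (hp : ∀ c, 0 < p c) (C : X → Xs) (CW : W → Ws) {D D' : X → Xs}
    (h : ∀ x, ∑ w, condRow p x w * log (condRow p x w / approxCondRow p C CW (D x) w)
      ≤ ∑ w, condRow p x w * log (condRow p x w / approxCondRow p C CW (D' x) w)) :
    rowLoss p C CW D ≤ rowLoss p C CW D' := by
  refine sum_le_sum fun x _ => ?_
  rw [sum_mul_marg₁_eq_sum_condRow hp, sum_mul_marg₁_eq_sum_condRow hp]
  exact mul_le_mul_of_nonneg_left (h x) (sum_nonneg fun _ _ => (hp _).le)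

lemma rowLoss_self_le_rowLoss (hp : ∀ c, 0 < p c) (C D : X → Xs) (CW : W → Ws)
    (hD : ∀ x w, approxCondRow p C CW (D x) w ≠ 0) :
    rowLoss p D CW D ≤ rowLoss p C CW D := by
  have hp' : ∀ c, 0 ≤ p c := fun c => (hp c).le
  set r : Xs × Ws → ℝ := fun cs =>
    condRow (coclust p C CW) cs.1 cs.2 / condRow (coclust p D CW) cs.1 cs.2
  have hr : ∀ x w, r (D x, CW w) = approxCondRow p C CW (D x) w / approxCondRow p D CW (D x) w :=
    fun x w => (approxCondRow_div_approxCondRow hp' C D CW (D x)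
      ((hp (x, w)).trans_le (le_marg₂ hp' x w))).symm
  have hsplit : ∀ x w, log (condRow p x w / approxCondRow p D CW (D x) w)
      = log (condRow p x w / approxCondRow p C CW (D x) w) + log (r (D x, CW w)) := by
    intro x w
    rw [hr, ← log_mul (div_ne_zero (condRow_pos hp x w).ne' (hD x w))
      (div_ne_zero (hD x w) (approxCondRow_pos hp D CW x w).ne'), div_mul_div_cancel₀ (hD x w)]
  have hgibbs : ∑ c : X × W, p c * log (r (D c.1, CW c.2)) ≤ 0 := by
    refine sum_mul_log_nonpos_of_sum_mul_le hp' (fun c _ => ?_) ?_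
    · rw [hr]
      exact div_pos ((approxCondRow_nonneg hp' C CW _ _).lt_of_ne' (hD _ _))
        (approxCondRow_pos hp D CW _ _)
    · rw [← sum_coclust_mul p D CW r]
      calc _ ≤ ∑ cs, coclust p D CW cs :=
            sum_mul_condRow_div_condRow_le (coclust_nonneg hp' C CW) (coclust_nonneg hp' D CW)
        _ = ∑ c, p c := by simpa using sum_coclust_mul p D CW 1
  calc rowLoss p D CW D = rowLoss p C CW D + ∑ c : X × W, p c * log (r (D c.1, CW c.2)) := by
        simp only [rowLoss, hsplit, mul_add, sum_add_distrib, Fintype.sum_prod_type]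
    _ ≤ rowLoss p C CW D := by linarith

end RowLoss

theorem row_update_monotone_general {X W Xs Ws : Type*} [Fintype X] [Fintype W]
    [Fintype Xs] [Fintype Ws] [DecidableEq Xs] [DecidableEq Ws]
    (p : X × W → ℝ) (hpos : ∀ c, 0 < p c)
    (CX : X → Xs) (CW : W → Ws) (CX' : X → Xs)
    (hupd : ∀ x : X,
      KLdiv (condRow p x) (approxCondRow p CX CW (CX' x))
        ≤ KLdiv (condRow p x) (approxCondRow p CX CW (CX x))) :
    lossA p CX' CW ≤ lossA p CX CW := by
  have hcurrent : ∀ x, KLdiv (condRow p x) (approxCondRow p CX CW (CX x))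
      = ((∑ w, condRow p x w * log (condRow p x w / approxCondRow p CX CW (CX x) w) : ℝ) :
        EReal) :=
    fun x => KLdiv_eq_sum (condRow_pos hpos x) fun w => (approxCondRow_pos hpos CX CW x w).ne'
  have hne : ∀ x w, approxCondRow p CX CW (CX' x) w ≠ 0 := fun x =>
    ne_zero_of_KLdiv_ne_top (condRow_pos hpos x)
      (ne_top_of_le_ne_top (by rw [hcurrent]; exact EReal.coe_ne_top _) (hupd x))
  have hrow : ∀ x,
      ∑ w, condRow p x w * log (condRow p x w / approxCondRow p CX CW (CX' x) w)
        ≤ ∑ w, condRow p x w * log (condRow p x w / approxCondRow p CX CW (CX x) w) := by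
    intro x
    have h := hupd x
    rwa [KLdiv_eq_sum (condRow_pos hpos x) (hne x), hcurrent, EReal.coe_le_coe_iff] at h
  calc lossA p CX' CW = rowLoss p CX' CW CX' := lossA_eq_rowLoss hpos CX' CW
    _ ≤ rowLoss p CX CW CX' := rowLoss_self_le_rowLoss hpos CX CX' CW hne
    _ ≤ rowLoss p CX CW CX := rowLoss_le_rowLoss hpos CX CW hrow
    _ = lossA p CX CW := (lossA_eq_rowLoss hpos CX CW).symm

/-- Row (cell) update monotonicity: if for every `x`,
`D(p(·|x) ‖ p̂(·|C_X' x)) ≤ D(p(·|x) ‖ p̂(·|C_X x))` (with `p̂` computed from the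
current pair `(C_X, C_W)`), then `ℓ_A(C_X', C_W) ≤ ℓ_A(C_X, C_W)`. -/
theorem row_update_monotone {X W Xs Ws : Type*} [Fintype X] [Fintype W] [Nonempty X] [Nonempty W]
    [Fintype Xs] [Fintype Ws] [DecidableEq Xs] [DecidableEq Ws]
    (p : X × W → ℝ) (hpos : ∀ c, 0 < p c) (hsum : ∑ c, p c = 1)
    (CX : X → Xs) (CW : W → Ws) (CX' : X → Xs)
    (hupd : ∀ x : X,
      KLdiv (condRow p x) (approxCondRow p CX CW (CX' x))
        ≤ KLdiv (condRow p x) (approxCondRow p CX CW (CX x))) :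
    lossA p CX' CW ≤ lossA p CX CW :=
  row_update_monotone_general p hpos CX CW CX' hupd
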